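/- Let {t_q}_{q≥3} be a sequence of real numbers with t_q ∈ [0,1) for every q, and let λ ∈ [0,∞] (with the convention Φ(∞) = 1). Then lim_{q→∞} β^{q−2}(t_q) = 1 − Φ(λ) if and only if lim_{q→∞} t_q·√q = λ. -/

import Mathlib

open MeasureTheory Filter

/-- The standard normal cumulative distribution function. -/
noncomputable def Phi (x : ℝ) : ℝ :=
  ∫ t in Set.Iic x, Real.exp (-t ^ 2 / 2) / Real.sqrt (2 * Real.pi)

/-- `betaCap q t` is the normalized surface area `β^{q-2}(t)` of a spherical cap of angular
half-width `arccos t` on a `(q-2)`-dimensional sphere. -/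
noncomputable def betaCap (q : ℕ) (t : ℝ) : ℝ :=
  (Real.Gamma (((q : ℝ) - 1) / 2) / (Real.Gamma (1 / 2) * Real.Gamma (((q : ℝ) - 2) / 2))) *
    ∫ v in t..1, (1 - v ^ 2) ^ ((q : ℝ) / 2 - 2)


section AuxLemmas
open Real

lemma sq_le_imp {a b : ℝ} (ha : 0 ≤ a) (hb : 0 ≤ b) (h : a^2 ≤ b^2) : a ≤ b := by
  have := Real.sqrt_le_sqrt h
  rwa [Real.sqrt_sq ha, Real.sqrt_sq hb] at this

lemma gamma_mid_sq_le {a b : ℝ} (ha : 0 < a) (hb : 0 < b) :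
    Real.Gamma ((a + b) / 2) ^ 2 ≤ Real.Gamma a * Real.Gamma b := by
  have h := Real.convexOn_log_Gamma.2 (Set.mem_Ioi.2 ha) (Set.mem_Ioi.2 hb)
    (by norm_num : (0:ℝ) ≤ 1/2) (by norm_num : (0:ℝ) ≤ 1/2) (by norm_num)
  simp only [smul_eq_mul, Function.comp] at h
  have hmid : (0:ℝ) < 1/2 * a + 1/2 * b := by linarith
  have ha' := Real.Gamma_pos_of_pos ha
  have hb' := Real.Gamma_pos_of_pos hb
  have hm' := Real.Gamma_pos_of_pos hmid
  have h2 : 2 * Real.log (Real.Gamma (1/2 * a + 1/2 * b)) ≤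
      Real.log (Real.Gamma a) + Real.log (Real.Gamma b) := by linarith
  have := Real.exp_le_exp.2 h2
  rw [Real.exp_add, Real.exp_log ha', Real.exp_log hb'] at this
  calc Real.Gamma ((a + b) / 2) ^ 2
      = Real.exp (2 * Real.log (Real.Gamma (1/2 * a + 1/2 * b))) := by
        rw [two_mul, Real.exp_add, Real.exp_log hm']
        ring_nf
    _ ≤ _ := this

lemma gamma_ratio_le {x : ℝ} (hx : 0 < x) :
    Real.Gamma (x + 1/2) ≤ Real.sqrt x * Real.Gamma x := by
  have h := gamma_mid_sq_le hx (by linarith : (0:ℝ) < x + 1)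
  rw [Real.Gamma_add_one hx.ne'] at h
  have h1 : (x + (x+1))/2 = x + 1/2 := by ring
  rw [h1] at h
  have hg := Real.Gamma_pos_of_pos hx
  have hg2 := Real.Gamma_pos_of_pos (by linarith : (0:ℝ) < x + 1/2)
  refine sq_le_imp hg2.le (by positivity) ?_
  rw [mul_pow, Real.sq_sqrt hx.le]
  nlinarith

lemma gamma_ratio_ge {x : ℝ} (hx : 0 < x) :
    x * Real.Gamma x ≤ Real.sqrt (x + 1/2) * Real.Gamma (x + 1/2) := by
  have hx2 : (0:ℝ) < x + 1/2 := by linarith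
  have h := gamma_mid_sq_le hx2 (by linarith : (0:ℝ) < x + 3/2)
  have h3 : (x + 3/2 : ℝ) = (x + 1/2) + 1 := by ring
  rw [h3, Real.Gamma_add_one hx2.ne'] at h
  have h1 : ((x + 1/2) + ((x+1/2) + 1))/2 = x + 1 := by ring
  rw [h1] at h
  have hg := Real.Gamma_pos_of_pos hx
  have hg2 := Real.Gamma_pos_of_pos hx2
  have := Real.Gamma_add_one hx.ne'
  refine sq_le_imp (by positivity) (by positivity) ?_
  have h4 : (x * Real.Gamma x)^2 = Real.Gamma (x+1)^2 := by rw [this]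
  rw [h4, mul_pow, Real.sq_sqrt hx2.le]
  nlinarith [h]

lemma ratio_tendsto :
    Tendsto (fun q : ℕ => Real.Gamma (((q:ℝ)-1)/2) /
      (Real.Gamma (1/2) * Real.Gamma (((q:ℝ)-2)/2)) / Real.sqrt q) atTop
      (nhds (Real.sqrt (2 * Real.pi))⁻¹) := by
  have hπ : (0:ℝ) < Real.pi := Real.pi_pos
  have hone : Tendsto (fun q : ℕ => 1/(q:ℝ)) atTop (nhds 0) :=
    tendsto_one_div_atTop_nhds_zero_nat
  have hlimval : Real.sqrt (1/2) / Real.sqrt Real.pi = (Real.sqrt (2 * Real.pi))⁻¹ := by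
    rw [Real.sqrt_mul (by norm_num : (0:ℝ) ≤ 2), show (1:ℝ)/2 = 2⁻¹ by norm_num,
      Real.sqrt_inv]
    field_simp
  have hU : Tendsto (fun q : ℕ => Real.sqrt (1/2 - 1/(q:ℝ)) / Real.sqrt Real.pi) atTop
      (nhds (Real.sqrt (2 * Real.pi))⁻¹) := by
    rw [← hlimval]
    apply Tendsto.div_const
    apply (Real.continuous_sqrt.tendsto _).comp
    simpa using (tendsto_const_nhds (x := (1/2:ℝ))).sub hone
  have hL : Tendsto (fun q : ℕ => Real.sqrt (1/2 - 3/2 * (1/(q:ℝ))) / Real.sqrt Real.pi)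
      atTop (nhds (Real.sqrt (2 * Real.pi))⁻¹) := by
    rw [← hlimval]
    apply Tendsto.div_const
    apply (Real.continuous_sqrt.tendsto _).comp
    simpa using (tendsto_const_nhds (x := (1/2:ℝ))).sub (hone.const_mul (3/2 : ℝ))
  refine tendsto_of_tendsto_of_tendsto_of_le_of_le' hL hU ?_ ?_
  · -- lower ≤ F
    filter_upwards [eventually_ge_atTop 3] with q hq
    have hq3 : (3:ℝ) ≤ (q:ℝ) := by exact_mod_cast hq
    set x : ℝ := ((q:ℝ)-2)/2 with hxdef
    have hx : 0 < x := by rw [hxdef]; linarith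
    have hx12 : (0:ℝ) ≤ x - 1/2 := by rw [hxdef]; linarith
    have hq0 : (0:ℝ) < (q:ℝ) := by linarith
    have hq0' : (q:ℝ) ≠ 0 := hq0.ne'
    have hsq : 0 < Real.sqrt q := Real.sqrt_pos.2 hq0
    have hgx := Real.Gamma_pos_of_pos hx
    have hg2 := Real.Gamma_pos_of_pos (by linarith : (0:ℝ) < x + 1/2)
    have hsx2 : (0:ℝ) < Real.sqrt (x + 1/2) := Real.sqrt_pos.2 (by linarith)
    have hsπ : (0:ℝ) < Real.sqrt Real.pi := Real.sqrt_pos.2 hπ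
    have hrw1 : ((q:ℝ)-1)/2 = x + 1/2 := by rw [hxdef]; ring
    have h1 : x / Real.sqrt (x+1/2) ≤ Real.Gamma (x+1/2) / Real.Gamma x := by
      rw [div_le_div_iff₀ hsx2 hgx]
      nlinarith [gamma_ratio_ge hx]
    have h2 : Real.sqrt (x - 1/2) ≤ x / Real.sqrt (x+1/2) := by
      refine sq_le_imp (Real.sqrt_nonneg _) (by positivity) ?_
      rw [div_pow, Real.sq_sqrt hx12, Real.sq_sqrt (by linarith : (0:ℝ) ≤ x + 1/2),
        le_div_iff₀ (by linarith : (0:ℝ) < x + 1/2)]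
      nlinarith
    have hR : Real.sqrt (x - 1/2) ≤ Real.Gamma (x+1/2) / Real.Gamma x := h2.trans h1
    have hFeq : Real.Gamma (x + 1/2) / (Real.sqrt Real.pi * Real.Gamma x) / Real.sqrt q
        = (Real.Gamma (x+1/2) / Real.Gamma x) / (Real.sqrt Real.pi * Real.sqrt q) := by
      rw [div_div, div_div]
      congr 1
      ring
    have heqL : Real.sqrt (1/2 - 3/2 * (1/(q:ℝ))) / Real.sqrt Real.pi
        = Real.sqrt (x - 1/2) / (Real.sqrt Real.pi * Real.sqrt q) := by
      have hinner : 1/2 - 3/2 * (1/(q:ℝ)) = (x - 1/2) / (q:ℝ) := by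
        rw [hxdef]; field_simp; try ring
      rw [hinner, Real.sqrt_div hx12]
      ring
    rw [hrw1, Real.Gamma_one_half_eq, hFeq, heqL]
    exact div_le_div_of_nonneg_right hR (by positivity) |>.trans (le_refl _)
  · -- F ≤ upper
    filter_upwards [eventually_ge_atTop 3] with q hq
    have hq3 : (3:ℝ) ≤ (q:ℝ) := by exact_mod_cast hq
    set x : ℝ := ((q:ℝ)-2)/2 with hxdef
    have hx : 0 < x := by rw [hxdef]; linarith
    have hq0 : (0:ℝ) < (q:ℝ) := by linarith
    have hq0' : (q:ℝ) ≠ 0 := hq0.ne'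
    have hsq : 0 < Real.sqrt q := Real.sqrt_pos.2 hq0
    have hgx := Real.Gamma_pos_of_pos hx
    have hsπ : (0:ℝ) < Real.sqrt Real.pi := Real.sqrt_pos.2 hπ
    have hrw1 : ((q:ℝ)-1)/2 = x + 1/2 := by rw [hxdef]; ring
    have hR : Real.Gamma (x+1/2) / Real.Gamma x ≤ Real.sqrt x :=
      (div_le_iff₀ hgx).2 (gamma_ratio_le hx)
    have hFeq : Real.Gamma (x + 1/2) / (Real.sqrt Real.pi * Real.Gamma x) / Real.sqrt q
        = (Real.Gamma (x+1/2) / Real.Gamma x) / (Real.sqrt Real.pi * Real.sqrt q) := by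
      rw [div_div, div_div]
      congr 1
      ring
    have heqU : Real.sqrt (1/2 - 1/(q:ℝ)) / Real.sqrt Real.pi
        = Real.sqrt x / (Real.sqrt Real.pi * Real.sqrt q) := by
      have hinner : 1/2 - 1/(q:ℝ) = x / (q:ℝ) := by
        rw [hxdef]; field_simp; try ring
      rw [hinner, Real.sqrt_div hx.le]
      ring
    rw [hrw1, Real.Gamma_one_half_eq, hFeq, heqU]
    exact div_le_div_of_nonneg_right hR (by positivity) |>.trans (le_refl _)

lemma betaCap_eq (q : ℕ) (hq : 3 ≤ q) {t : ℝ} (ht0 : 0 ≤ t) (ht1 : t ≤ 1) :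
    betaCap q t =
      (Real.Gamma (((q:ℝ)-1)/2) / (Real.Gamma (1/2) * Real.Gamma (((q:ℝ)-2)/2)) /
        Real.sqrt q) *
      ∫ s, (Set.Ioc (t * Real.sqrt q) (Real.sqrt q)).indicator
        (fun s => (1 - s^2/(q:ℝ)) ^ ((q:ℝ)/2 - 2)) s := by
  have hq0 : (0:ℝ) < (q:ℝ) := by
    have : (3:ℝ) ≤ (q:ℝ) := by exact_mod_cast hq
    linarith
  have hsq : 0 < Real.sqrt q := Real.sqrt_pos.2 hq0
  have hc : (Real.sqrt q)⁻¹ ≠ 0 := inv_ne_zero hsq.ne'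
  have key := intervalIntegral.integral_comp_mul_right
    (f := fun v => (1 - v^2) ^ ((q:ℝ)/2 - 2)) (a := t * Real.sqrt q) (b := Real.sqrt q) hc
  rw [inv_inv, mul_assoc, mul_inv_cancel₀ hsq.ne', mul_one] at key
  have hfun : ∀ x : ℝ, (1 - (x * (Real.sqrt q)⁻¹)^2) ^ ((q:ℝ)/2-2)
      = (1 - x^2/(q:ℝ)) ^ ((q:ℝ)/2-2) := by
    intro x
    congr 1
    rw [mul_pow, ← Real.sqrt_inv, Real.sq_sqrt (by positivity : (0:ℝ) ≤ ((q:ℝ))⁻¹)]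
    ring
  simp only [hfun] at key
  have h1 : (∫ v in t..1, (1 - v^2) ^ ((q:ℝ)/2 - 2))
      = (Real.sqrt q)⁻¹ * ∫ s in (t * Real.sqrt q)..(Real.sqrt q),
          (1 - s^2/(q:ℝ)) ^ ((q:ℝ)/2 - 2) := by
    rw [key, smul_eq_mul, ← mul_assoc, inv_mul_cancel₀ hsq.ne', one_mul]
  have hab : t * Real.sqrt q ≤ Real.sqrt q := by
    nlinarith [Real.sqrt_nonneg (q:ℝ)]
  have h2 : (∫ s in (t * Real.sqrt q)..(Real.sqrt q), (1 - s^2/(q:ℝ)) ^ ((q:ℝ)/2 - 2))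
      = ∫ s, (Set.Ioc (t * Real.sqrt q) (Real.sqrt q)).indicator
          (fun s => (1 - s^2/(q:ℝ)) ^ ((q:ℝ)/2 - 2)) s := by
    rw [intervalIntegral.integral_of_le hab, ← integral_indicator measurableSet_Ioc]
  unfold betaCap
  rw [h1, h2]
  ring

lemma integrable_gauss_half : Integrable (fun s : ℝ => Real.exp (-s^2/2)) := by
  have h := integrable_exp_neg_mul_sq (by norm_num : (0:ℝ) < 1/2)
  exact h.congr (Filter.Eventually.of_forall fun x => by ring_nf)

lemma gauss_total : ∫ s : ℝ, Real.exp (-s^2/2) = Real.sqrt (2 * Real.pi) := by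
  have h := integral_gaussian (1/2 : ℝ)
  rw [show Real.pi/(1/2) = 2*Real.pi by ring] at h
  rw [← h]
  simp only [show ∀ x:ℝ, -x^2/2 = -(1/2)*x^2 from fun x => by ring]

lemma one_sub_Phi (a : ℝ) :
    1 - Phi a = (Real.sqrt (2*Real.pi))⁻¹ * ∫ s in Set.Ioi a, Real.exp (-s^2/2) := by
  have hπ := Real.pi_pos
  have hs : (0:ℝ) < Real.sqrt (2*Real.pi) := Real.sqrt_pos.2 (by positivity)
  have hint := integrable_gauss_half
  have hsplit : (∫ s in Set.Iic a, Real.exp (-s^2/2)) + ∫ s in Set.Ioi a, Real.exp (-s^2/2)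
      = Real.sqrt (2*Real.pi) := by
    rw [← gauss_total]
    exact intervalIntegral.integral_Iic_add_Ioi hint.integrableOn hint.integrableOn
  have hPhi : Phi a = (∫ s in Set.Iic a, Real.exp (-s^2/2)) / Real.sqrt (2*Real.pi) := by
    unfold Phi
    rw [integral_div]
  set S := Real.sqrt (2*Real.pi) with hS
  set I1 := ∫ s in Set.Iic a, Real.exp (-s^2/2) with hI1
  set I2 := ∫ s in Set.Ioi a, Real.exp (-s^2/2) with hI2
  rw [hPhi]
  rw [div_eq_mul_inv, show I2 = S - I1 by linarith, mul_sub, inv_mul_cancel₀ hs.ne']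
  ring

lemma int_Ioi_pos (a : ℝ) : 0 < ∫ s in Set.Ioi a, Real.exp (-s^2/2) := by
  rw [setIntegral_pos_iff_support_of_nonneg_ae
    (Filter.Eventually.of_forall fun x => (Real.exp_pos _).le)
    integrable_gauss_half.integrableOn]
  have hsupp : Function.support (fun s : ℝ => Real.exp (-s^2/2)) = Set.univ :=
    Set.eq_univ_of_forall fun x => (Real.exp_pos _).ne'
  simp [hsupp, Real.volume_Ioi]

lemma int_Ioc_pos {x y : ℝ} (h : x < y) : 0 < ∫ s in Set.Ioc x y, Real.exp (-s^2/2) := by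
  rw [setIntegral_pos_iff_support_of_nonneg_ae
    (Filter.Eventually.of_forall fun x => (Real.exp_pos _).le)
    integrable_gauss_half.integrableOn]
  have hsupp : Function.support (fun s : ℝ => Real.exp (-s^2/2)) = Set.univ :=
    Set.eq_univ_of_forall fun x => (Real.exp_pos _).ne'
  simp [hsupp, Real.volume_Ioc, h, sub_pos]

lemma Phi_lt_one (a : ℝ) : Phi a < 1 := by
  have h := one_sub_Phi a
  have hs : (0:ℝ) < (Real.sqrt (2*Real.pi))⁻¹ := by
    have := Real.pi_pos; positivity
  nlinarith [int_Ioi_pos a]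

lemma Phi_strictMono : StrictMono Phi := by
  intro x y hxy
  have hx := one_sub_Phi x
  have hy := one_sub_Phi y
  have hs : (0:ℝ) < (Real.sqrt (2*Real.pi))⁻¹ := by
    have := Real.pi_pos; positivity
  have hsplit : (∫ s in Set.Ioc x y, Real.exp (-s^2/2)) + ∫ s in Set.Ioi y, Real.exp (-s^2/2)
      = ∫ s in Set.Ioi x, Real.exp (-s^2/2) := by
    rw [← MeasureTheory.setIntegral_union (Set.Ioc_disjoint_Ioi le_rfl) measurableSet_Ioi
      integrable_gauss_half.integrableOn integrable_gauss_half.integrableOn,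
      Set.Ioc_union_Ioi_eq_Ioi hxy.le]
  nlinarith [int_Ioc_pos hxy]

lemma rpow_tendsto (s : ℝ) :
    Tendsto (fun q : ℕ => (1 - s^2/(q:ℝ)) ^ ((q:ℝ)/2 - 2)) atTop
      (nhds (Real.exp (-s^2/2))) := by
  have hcast : Tendsto (fun q : ℕ => (q:ℝ)) atTop atTop := tendsto_natCast_atTop_atTop
  have h1 : Tendsto (fun q : ℕ => (q:ℝ) * Real.log (1 + (-s^2)/(q:ℝ))) atTop (nhds (-s^2)) :=
    (Real.tendsto_mul_log_one_add_div_atTop (-s^2)).comp hcast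
  have h2 : Tendsto (fun q : ℕ => ((q:ℝ)/2 - 2)/(q:ℝ)) atTop (nhds (1/2)) := by
    have hone : Tendsto (fun q : ℕ => 1/(q:ℝ)) atTop (nhds 0) :=
      tendsto_one_div_atTop_nhds_zero_nat
    have h2' : Tendsto (fun q : ℕ => 1/2 - 2*(1/(q:ℝ))) atTop (nhds (1/2)) := by
      simpa using (tendsto_const_nhds (x := (1/2:ℝ))).sub (hone.const_mul (2:ℝ))
    refine h2'.congr' ?_
    filter_upwards [eventually_ge_atTop 1] with q hq
    have hq0 : (q:ℝ) ≠ 0 := by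
      have : (1:ℝ) ≤ (q:ℝ) := by exact_mod_cast hq
      linarith
    field_simp
  have h3 := h1.mul h2
  rw [show (-s^2) * (1/2) = -s^2/2 by ring] at h3
  have h4 := (Real.continuous_exp.tendsto _).comp h3
  refine Tendsto.congr' ?_ h4
  filter_upwards [hcast.eventually_gt_atTop (s^2), hcast.eventually_gt_atTop 0] with q hq hq0
  have hb : 0 < 1 - s^2/(q:ℝ) := by
    rw [sub_pos, div_lt_one hq0]; exact hq
  show Real.exp ((q:ℝ) * Real.log (1 + -s^2/(q:ℝ)) * (((q:ℝ)/2-2)/(q:ℝ)))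
      = (1 - s^2/(q:ℝ)) ^ ((q:ℝ)/2 - 2)
  rw [Real.rpow_def_of_pos hb]
  congr 1
  rw [show 1 + -s^2/(q:ℝ) = 1 - s^2/(q:ℝ) by ring]
  field_simp

lemma ofReal_tendsto_top {f : ℕ → ℝ} 
    (h : Tendsto (fun n => ENNReal.ofReal (f n)) atTop (nhds ⊤)) :
    Tendsto f atTop atTop := by
  rw [ENNReal.tendsto_nhds_top_iff_nat] at h
  refine tendsto_atTop.2 fun M => ?_
  obtain ⟨n, hn⟩ := exists_nat_ge M
  filter_upwards [h n] with k hk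
  have hlt : (n:ℝ) < f k := by
    by_contra hle
    push_neg at hle
    have h2 : ENNReal.ofReal (f k) ≤ ENNReal.ofReal n := ENNReal.ofReal_le_ofReal hle
    rw [ENNReal.ofReal_natCast] at h2
    exact absurd (lt_of_lt_of_le hk h2) (lt_irrefl _)
  linarith

lemma ofReal_tendsto_fin {f : ℕ → ℝ} (hf : ∀ n, 0 ≤ f n) {l : ENNReal} (hl : l ≠ ⊤)
    (h : Tendsto (fun n => ENNReal.ofReal (f n)) atTop (nhds l)) :
    Tendsto f atTop (nhds l.toReal) := by
  have h2 := (ENNReal.tendsto_toReal hl).comp h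
  exact h2.congr fun n => ENNReal.toReal_ofReal (hf n)

lemma fwd (u : ℕ → ℕ) (hu : Tendsto u atTop atTop) (t : ℕ → ℝ)
    (ht : ∀ q, t q ∈ Set.Ico (0:ℝ) 1) (l : ENNReal)
    (h : Tendsto (fun k => ENNReal.ofReal (t (u k) * Real.sqrt (u k))) atTop (nhds l)) :
    Tendsto (fun k => betaCap (u k) (t (u k))) atTop
      (nhds (1 - if l = ⊤ then 1 else Phi l.toReal)) := by
  have hπ := Real.pi_pos
  set A : ℕ → ℝ := fun k => t (u k) * Real.sqrt (u k) with hAdef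
  have hA0 : ∀ k, 0 ≤ A k := fun k => mul_nonneg (ht _).1 (Real.sqrt_nonneg _)
  set G : ℝ → ℝ := if l = ⊤ then (fun _ => 0) else
    (Set.Ioi l.toReal).indicator (fun s => Real.exp (-s^2/2)) with hG
  set F : ℕ → ℝ → ℝ := fun k => (Set.Ioc (A k) (Real.sqrt (u k))).indicator
    (fun s => (1 - s^2/((u k):ℝ)) ^ (((u k):ℝ)/2 - 2)) with hF
  have hsqrtu : Tendsto (fun k => Real.sqrt (u k)) atTop atTop := by
    have hc : Tendsto (fun k => ((u k : ℕ) : ℝ)) atTop atTop :=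
      tendsto_natCast_atTop_atTop.comp hu
    have h12 : Tendsto (fun x : ℝ => x ^ (1/2 : ℝ)) atTop atTop :=
      tendsto_rpow_atTop (by norm_num)
    exact (h12.comp hc).congr fun k => (Real.sqrt_eq_rpow _).symm
  -- dominated convergence
  have hInt : Tendsto (fun k => ∫ s, F k s) atTop (nhds (∫ s, G s)) := by
    apply tendsto_integral_filter_of_dominated_convergence
      (bound := fun s : ℝ => Real.exp (-(4⁻¹) * s^2))
    · -- measurability
      filter_upwards [hu.eventually_ge_atTop 8] with k hk
      have hexp : (0:ℝ) ≤ ((u k):ℝ)/2 - 2 := by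
        have : (8:ℝ) ≤ ((u k):ℝ) := by exact_mod_cast hk
        linarith
      have hcont : Continuous (fun s : ℝ => (1 - s^2/((u k):ℝ)) ^ (((u k):ℝ)/2 - 2)) :=
        (continuous_const.sub ((continuous_pow 2).div_const _)).rpow_const
          (fun x => Or.inr hexp)
      exact (hcont.measurable.indicator measurableSet_Ioc).aestronglyMeasurable
    · -- bound
      filter_upwards [hu.eventually_ge_atTop 8] with k hk
      refine Filter.Eventually.of_forall fun s => ?_
      have hq8 : (8:ℝ) ≤ ((u k):ℝ) := by exact_mod_cast hk
      have hq0 : (0:ℝ) < ((u k):ℝ) := by linarith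
      have hexp : (2:ℝ) ≤ ((u k):ℝ)/2 - 2 := by linarith
      by_cases hs : s ∈ Set.Ioc (A k) (Real.sqrt (u k))
      · rw [hF]
        simp only [Set.indicator_of_mem hs]
        have hs0 : 0 < s := lt_of_le_of_lt (hA0 k) hs.1
        have hs2 : s^2 ≤ ((u k):ℝ) := by
          have := hs.2
          rwa [Real.le_sqrt hs0.le (by positivity)] at this
        have hb0 : 0 ≤ 1 - s^2/((u k):ℝ) := by
          rw [sub_nonneg, div_le_one hq0]; exact hs2
        rw [Real.norm_of_nonneg (Real.rpow_nonneg hb0 _)]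
        rcases eq_or_lt_of_le hb0 with hb | hb
        · rw [← hb, Real.zero_rpow (by linarith)]
          positivity
        · rw [Real.rpow_def_of_pos hb]
          rw [Real.exp_le_exp]
          have hlog : Real.log (1 - s^2/((u k):ℝ)) ≤ -(s^2/((u k):ℝ)) := by
            have := Real.log_le_sub_one_of_pos hb
            linarith
          have hstep := mul_le_mul_of_nonneg_right hlog (by linarith : (0:ℝ) ≤ ((u k):ℝ)/2 - 2)
          refine hstep.trans ?_
          nlinarith [div_nonneg (sq_nonneg s) hq0.le, div_mul_cancel₀ (s^2) hq0.ne',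
            sq_nonneg s]
      · rw [hF]
        simp only [Set.indicator_of_notMem hs]
        simp only [norm_zero]
        positivity
    · exact integrable_exp_neg_mul_sq (by norm_num)
    · -- a.e. pointwise convergence
      by_cases hl : l = ⊤
      · have hAtop : Tendsto A atTop atTop := by
          apply ofReal_tendsto_top
          rw [← hl]
          exact h
        refine Filter.Eventually.of_forall fun s => ?_
        have hGs : G s = 0 := by rw [hG, if_pos hl]
        rw [hGs]
        have hev : ∀ᶠ k in atTop, F k s = 0 := by
          filter_upwards [hAtop.eventually_gt_atTop s] with k hk
          rw [hF]
          exact Set.indicator_of_notMem (fun hmem => absurd hmem.1 (not_lt.2 hk.le)) _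
        exact tendsto_const_nhds.congr' (hev.mono fun k hk => hk.symm)
      · have hA : Tendsto A atTop (nhds l.toReal) := ofReal_tendsto_fin hA0 hl h
        have hae : ∀ᵐ s : ℝ, s ≠ l.toReal := by
          rw [MeasureTheory.ae_iff]
          simpa [not_not, Set.setOf_eq_eq_singleton] using
            Real.volume_singleton (a := l.toReal)
        filter_upwards [hae] with s hs
        rcases lt_or_gt_of_ne hs with hlt | hgt
        · have hGs : G s = 0 := by
            rw [hG, if_neg hl]
            exact Set.indicator_of_notMem (by simp [Set.mem_Ioi]; linarith) _
          rw [hGs]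
          have hev : ∀ᶠ k in atTop, F k s = 0 := by
            filter_upwards [hA.eventually_const_lt hlt] with k hk
            rw [hF]
            exact Set.indicator_of_notMem (fun hmem => absurd hmem.1 (not_lt.2 hk.le)) _
          exact tendsto_const_nhds.congr' (hev.mono fun k hk => hk.symm)
        · have hGs : G s = Real.exp (-s^2/2) := by
            rw [hG, if_neg hl]
            exact Set.indicator_of_mem (Set.mem_Ioi.2 hgt) _
          rw [hGs]
          have hbase := (rpow_tendsto s).comp hu
          refine Tendsto.congr' ?_ hbase
          filter_upwards [hA.eventually_lt_const hgt, hsqrtu.eventually_ge_atTop s]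
            with k hk1 hk2
          rw [hF]
          exact (Set.indicator_of_mem (Set.mem_Ioc.2 ⟨hk1, hk2⟩)
            (fun s => (1 - s^2/((u k):ℝ)) ^ (((u k):ℝ)/2 - 2))).symm
  have hC := ratio_tendsto.comp hu
  have hprod := hC.mul hInt
  have hval : (Real.sqrt (2*Real.pi))⁻¹ * ∫ s, G s
      = 1 - if l = ⊤ then 1 else Phi l.toReal := by
    by_cases hl : l = ⊤
    · rw [hG, if_pos hl, if_pos hl]
      simp
    · rw [hG, if_neg hl, if_neg hl, integral_indicator measurableSet_Ioi]
      exact (one_sub_Phi l.toReal).symm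
  rw [← hval]
  refine Tendsto.congr' ?_ hprod
  filter_upwards [hu.eventually_ge_atTop 3] with k hk
  exact (betaCap_eq (u k) hk (ht _).1 (ht _).2.le).symm

lemma target_inj {l1 l2 : ENNReal}
    (h : (1 - if l1 = ⊤ then 1 else Phi l1.toReal)
       = (1 - if l2 = ⊤ then 1 else Phi l2.toReal)) : l1 = l2 := by
  by_cases h1 : l1 = ⊤ <;> by_cases h2 : l2 = ⊤
  · rw [h1, h2]
  · rw [if_pos h1, if_neg h2] at h
    have := Phi_lt_one l2.toReal
    exfalso; linarith
  · rw [if_neg h1, if_pos h2] at h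
    have := Phi_lt_one l1.toReal
    exfalso; linarith
  · rw [if_neg h1, if_neg h2] at h
    have heq : Phi l1.toReal = Phi l2.toReal := by linarith
    exact (ENNReal.toReal_eq_toReal_iff' h1 h2).1 (Phi_strictMono.injective heq)


end AuxLemmas

/-- Lemma 2.1: for a sequence `t q ∈ [0,1)` and `λ ∈ [0,∞]` (with the convention `Φ(∞) = 1`),
`β^{q-2}(t_q) → 1 - Φ(λ)` iff `t_q √q → λ`. -/
theorem stmt0 (t : ℕ → ℝ) (ht : ∀ q, t q ∈ Set.Ico (0 : ℝ) 1) (l : ENNReal) :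
    Tendsto (fun q : ℕ => betaCap q (t q)) atTop
        (nhds (1 - if l = ⊤ then 1 else Phi l.toReal)) ↔
      Tendsto (fun q : ℕ => ENNReal.ofReal (t q * Real.sqrt q)) atTop (nhds l) := by
  constructor
  · intro hβ
    apply tendsto_of_subseq_tendsto
    intro ns hns
    obtain ⟨l', -, φ, hφ, hconv⟩ :=
      (isCompact_univ : IsCompact (Set.univ : Set ENNReal)).tendsto_subseq
        (x := fun n => ENNReal.ofReal (t (ns n) * Real.sqrt (ns n)))
        (fun n => Set.mem_univ _)
    have hu : Tendsto (fun n => ns (φ n)) atTop atTop := hns.comp hφ.tendsto_atTop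
    have h1 := fwd (fun n => ns (φ n)) hu t ht l' hconv
    have h2 := hβ.comp hu
    have heq := tendsto_nhds_unique h1 h2
    have hll : l' = l := target_inj heq
    exact ⟨φ, by rwa [hll] at hconv⟩
  · intro h
    exact fwd id tendsto_id t ht l h
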